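/- arXiv:1402.5639 — 2 statements merged into one kernel-verified Lean document; each statement's English description precedes it below -/
import Mathlib

section
/- Let φ : ℝ² → ℝ be differentiable, k > 0, and let p : ℝ → ℝ² and θ, θ_d : ℝ → ℝ be functions such that for every t: ∇φ(p(t)) = -‖∇φ(p(t))‖·(cos θ_d(t), sin θ_d(t)) and p'(t) = k·‖∇φ(p(t))‖·cos(θ(t) - θ_d(t))·(cos θ(t), sin θ(t)). Then t ↦ φ(p(t)) is differentiable with derivative d/dt φ(p(t)) = -k·‖∇φ(p(t))‖²·cos²(θ(t) - θ_d(t)), which is nonpositive for all t. -/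
/-! By the chain rule, `d/dt φ(p t) = ⟪∇φ(p t), ṗ t⟫`. The gradient points along `-e(θ_d)` and the
velocity along `e(θ)`, where `e(α) = (cos α, sin α)`, and `⟪e(θ_d), e(θ)⟫ = cos θ̃`; the velocity
magnitude `k‖∇φ‖cos θ̃` then makes the derivative `-k‖∇φ‖² cos² θ̃`. -/

open Real

theorem HasGradientAt.hasDerivAt_comp {F : Type*} [NormedAddCommGroup F]
    [InnerProductSpace ℝ F] [CompleteSpace F] {φ : F → ℝ} {g : F} {p : ℝ → F} {v : F} {t : ℝ}
    (hφ : HasGradientAt φ g (p t)) (hp : HasDerivAt p v t) :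
    HasDerivAt (fun s => φ (p s)) (inner ℝ g v) t := by
  have h := hφ.hasFDerivAt.comp_hasDerivAt t hp
  rwa [InnerProductSpace.toDual_apply_apply] at h

theorem EuclideanSpace.inner_cos_sin (α β : ℝ) :
    inner ℝ ((WithLp.equiv 2 (Fin 2 → ℝ)).symm ![cos α, sin α])
      ((WithLp.equiv 2 (Fin 2 → ℝ)).symm ![cos β, sin β]) = cos (β - α) := by
  simp [PiLp.inner_apply, Fin.sum_univ_two, cos_sub]

theorem inner_smul_right_of_eq_neg_norm_smul {F : Type*} [NormedAddCommGroup F]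
    [InnerProductSpace ℝ F] {g e u : F} (hg : g = (-‖g‖) • e) (k : ℝ) :
    inner ℝ g ((k * ‖g‖ * inner ℝ e u) • u) = -k * ‖g‖ ^ 2 * inner ℝ e u ^ 2 := by
  conv_lhs => rw [real_inner_smul_right]; arg 2; rw [hg]
  rw [real_inner_smul_left]
  ring

/-- The potential is nonincreasing along closed-loop unicycle trajectories
driven by the linear-velocity control `v = k‖∇φ‖cos θ̃` (eq. (11)):
`d/dt φ(p(t)) = -k ‖∇φ(p(t))‖² cos²(θ(t) - θ_d(t)) ≤ 0`. -/
theorem potential_nonincreasing_along_trajectory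
    (φ : EuclideanSpace ℝ (Fin 2) → ℝ) (hφ : Differentiable ℝ φ)
    (k : ℝ) (hk : 0 < k)
    (p : ℝ → EuclideanSpace ℝ (Fin 2)) (θ θd : ℝ → ℝ)
    (hgrad : ∀ t : ℝ, gradient φ (p t) =
      (-‖gradient φ (p t)‖) • (WithLp.equiv 2 (Fin 2 → ℝ)).symm
        ![Real.cos (θd t), Real.sin (θd t)])
    (hp : ∀ t : ℝ, HasDerivAt p
      ((k * ‖gradient φ (p t)‖ * Real.cos (θ t - θd t)) •
        (WithLp.equiv 2 (Fin 2 → ℝ)).symm ![Real.cos (θ t), Real.sin (θ t)]) t) :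
    ∀ t : ℝ,
      HasDerivAt (fun s => φ (p s))
        (-k * ‖gradient φ (p t)‖ ^ 2 * Real.cos (θ t - θd t) ^ 2) t ∧
      -k * ‖gradient φ (p t)‖ ^ 2 * Real.cos (θ t - θd t) ^ 2 ≤ 0 := by
  intro t
  have hcos := EuclideanSpace.inner_cos_sin (θd t) (θ t)
  have hderiv := (hφ (p t)).hasGradientAt.hasDerivAt_comp (hp t)
  rw [← hcos, inner_smul_right_of_eq_neg_norm_smul (hgrad t), hcos] at hderiv
  refine ⟨hderiv, ?_⟩
  have hsq : 0 ≤ k * ‖gradient φ (p t)‖ ^ 2 * Real.cos (θ t - θd t) ^ 2 := by positivity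
  linarith
end

section
/- Let φ : ℝ² → ℝ be twice continuously differentiable, k > 0, and let p : ℝ → ℝ² and θ, θ_d : ℝ → ℝ be differentiable functions such that for every t: ∇φ(p(t)) ≠ 0, ∇φ(p(t)) = -‖∇φ(p(t))‖·(cos θ_d(t), sin θ_d(t)), and p'(t) = k·‖∇φ(p(t))‖·cos(θ(t) - θ_d(t))·(cos θ(t), sin θ(t)). Then θ_d'(t) = k·cos(θ(t) - θ_d(t)) · [sin θ_d(t), -cos θ_d(t)] · ∇²φ(p(t)) · [cos θ(t), sin θ(t)]ᵀ, where ∇²φ(p(t)) is the Hessian matrix of φ at p(t). -/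
open scoped RealInnerProductSpace

/-!
Differentiate the identity `⟪n(θ_d(t)), ∇φ(p(t))⟫ = 0`, where `n(a) = (sin a, -cos a)` is the unit
normal to the heading `(cos a, sin a)`. Since `n' = θ_d' (cos θ_d, sin θ_d)` and
`⟪(cos θ_d, sin θ_d), ∇φ⟫ = -‖∇φ‖`, the product rule gives
`-θ_d' ‖∇φ‖ + ⟪n(θ_d), ∇²φ p'⟫ = 0`, and `p'` carries the same factor `‖∇φ‖ ≠ 0`, which cancels.
-/

theorem ContDiff.gradient {E : Type*} [NormedAddCommGroup E] [InnerProductSpace ℝ E]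
    [CompleteSpace E] {f : E → ℝ} {n : WithTop ℕ∞} (hf : ContDiff ℝ (n + 1) f) :
    ContDiff ℝ n (gradient f) :=
  (InnerProductSpace.toDual ℝ E).symm.contDiff.comp (hf.fderiv_right le_rfl)

theorem HasDerivAt.inner_add_inner_eq_zero_of_orthogonal {E : Type*} [NormedAddCommGroup E]
    [InnerProductSpace ℝ E] {f g : ℝ → E} {f' g' : E} {t : ℝ} (hf : HasDerivAt f f' t)
    (hg : HasDerivAt g g' t) (horth : ∀ᶠ s in nhds t, ⟪f s, g s⟫ = 0) :
    ⟪f t, g'⟫ + ⟪f', g t⟫ = 0 :=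
  (hf.inner ℝ hg).unique ((hasDerivAt_const t 0).congr_of_eventuallyEq horth)

noncomputable section

def headingVec (a : ℝ) : EuclideanSpace ℝ (Fin 2) :=
  (WithLp.equiv 2 (Fin 2 → ℝ)).symm ![Real.cos a, Real.sin a]

def headingNormal (a : ℝ) : EuclideanSpace ℝ (Fin 2) :=
  (WithLp.equiv 2 (Fin 2 → ℝ)).symm ![Real.sin a, -Real.cos a]

end

theorem inner_headingVec_self (a : ℝ) : ⟪headingVec a, headingVec a⟫ = 1 := by
  simp only [headingVec, PiLp.inner_apply, RCLike.inner_apply, conj_trivial,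
    WithLp.equiv_symm_apply, Fin.sum_univ_two, Matrix.cons_val_zero,
    Matrix.cons_val_one]
  linear_combination Real.cos_sq_add_sin_sq a

theorem inner_headingNormal_headingVec (a : ℝ) : ⟪headingNormal a, headingVec a⟫ = 0 := by
  simp only [headingNormal, headingVec, PiLp.inner_apply, RCLike.inner_apply, conj_trivial,
    WithLp.equiv_symm_apply, Fin.sum_univ_two, Matrix.cons_val_zero,
    Matrix.cons_val_one]
  ring

theorem HasDerivAt.headingNormal {f : ℝ → ℝ} {f' t : ℝ} (hf : HasDerivAt f f' t) :
    HasDerivAt (fun s => headingNormal (f s)) (f' • headingVec (f t)) t := by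
  have hcoord : HasDerivAt (fun s => ![Real.sin (f s), -Real.cos (f s)])
      (f' • ![Real.cos (f t), Real.sin (f t)]) t := by
    rw [hasDerivAt_pi]
    intro i
    fin_cases i
    · simpa [mul_comm] using hf.sin
    · simpa [mul_comm, Pi.neg_def] using hf.cos.neg
  exact ((PiLp.continuousLinearEquiv 2 ℝ (fun _ : Fin 2 => ℝ)).symm :
    (Fin 2 → ℝ) →L[ℝ] EuclideanSpace ℝ (Fin 2)).hasFDerivAt.comp_hasDerivAt t hcoord

theorem desired_orientation_rate_general
    (φ : EuclideanSpace ℝ (Fin 2) → ℝ) (hφ : ContDiff ℝ 2 φ)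
    (k : ℝ)
    (p : ℝ → EuclideanSpace ℝ (Fin 2)) (θ θd : ℝ → ℝ)
    (hθdd : Differentiable ℝ θd)
    (hne : ∀ t : ℝ, gradient φ (p t) ≠ 0)
    (hgrad : ∀ t : ℝ, gradient φ (p t) =
      (-‖gradient φ (p t)‖) • (WithLp.equiv 2 (Fin 2 → ℝ)).symm
        ![Real.cos (θd t), Real.sin (θd t)])
    (hp : ∀ t : ℝ, HasDerivAt p
      ((k * ‖gradient φ (p t)‖ * Real.cos (θ t - θd t)) •
        (WithLp.equiv 2 (Fin 2 → ℝ)).symm ![Real.cos (θ t), Real.sin (θ t)]) t) :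
    ∀ t : ℝ, deriv θd t =
      k * Real.cos (θ t - θd t) *
        ⟪(WithLp.equiv 2 (Fin 2 → ℝ)).symm ![Real.sin (θd t), -Real.cos (θd t)],
          fderiv ℝ (gradient φ) (p t)
            ((WithLp.equiv 2 (Fin 2 → ℝ)).symm
              ![Real.cos (θ t), Real.sin (θ t)])⟫ := by
  intro t
  change deriv θd t = k * Real.cos (θ t - θd t) *
    ⟪headingNormal (θd t), fderiv ℝ (gradient φ) (p t) (headingVec (θ t))⟫
  have hgrad' : ∀ s, gradient φ (p s) = (-‖gradient φ (p s)‖) • headingVec (θd s) := hgrad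
  have hgradDeriv : HasDerivAt (fun s => gradient φ (p s)) (fderiv ℝ (gradient φ) (p t)
      ((k * ‖gradient φ (p t)‖ * Real.cos (θ t - θd t)) • headingVec (θ t))) t :=
    ((hφ.gradient (n := 1)).differentiable one_ne_zero (p t)).hasFDerivAt.comp_hasDerivAt t (hp t)
  have horth := (hθdd t).hasDerivAt.headingNormal.inner_add_inner_eq_zero_of_orthogonal
    hgradDeriv (.of_forall fun s => by
      rw [hgrad' s, real_inner_smul_right, inner_headingNormal_headingVec, mul_zero])
  have hheading : ⟪headingVec (θd t), gradient φ (p t)⟫ = -‖gradient φ (p t)‖ := by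
    nth_rw 1 [hgrad' t]
    rw [real_inner_smul_right, inner_headingVec_self, mul_one]
  rw [map_smul, real_inner_smul_right, real_inner_smul_left, hheading] at horth
  exact mul_left_cancel₀ (norm_ne_zero_iff.2 (hne t)) (by linear_combination -horth)

/-- Formula (12) of the paper for the feedforward term `θ̇_d`: along a closed-loop
unicycle trajectory with `∇φ(p(t)) = -‖∇φ(p(t))‖ (cos θ_d, sin θ_d)` and
`p' = k‖∇φ‖cos(θ - θ_d)(cos θ, sin θ)`, the desired-orientation rate is
`θ_d' = k cos(θ - θ_d) [sin θ_d, -cos θ_d] ∇²φ [cos θ, sin θ]ᵀ`, where the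
Hessian `∇²φ` is the (Fréchet) derivative of the gradient of `φ`. -/
theorem desired_orientation_rate
    (φ : EuclideanSpace ℝ (Fin 2) → ℝ) (hφ : ContDiff ℝ 2 φ)
    (k : ℝ) (hk : 0 < k)
    (p : ℝ → EuclideanSpace ℝ (Fin 2)) (θ θd : ℝ → ℝ)
    (hpd : Differentiable ℝ p) (hθd : Differentiable ℝ θ)
    (hθdd : Differentiable ℝ θd)
    (hne : ∀ t : ℝ, gradient φ (p t) ≠ 0)
    (hgrad : ∀ t : ℝ, gradient φ (p t) =
      (-‖gradient φ (p t)‖) • (WithLp.equiv 2 (Fin 2 → ℝ)).symm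
        ![Real.cos (θd t), Real.sin (θd t)])
    (hp : ∀ t : ℝ, HasDerivAt p
      ((k * ‖gradient φ (p t)‖ * Real.cos (θ t - θd t)) •
        (WithLp.equiv 2 (Fin 2 → ℝ)).symm ![Real.cos (θ t), Real.sin (θ t)]) t) :
    ∀ t : ℝ, deriv θd t =
      k * Real.cos (θ t - θd t) *
        ⟪(WithLp.equiv 2 (Fin 2 → ℝ)).symm ![Real.sin (θd t), -Real.cos (θd t)],
          fderiv ℝ (gradient φ) (p t)
            ((WithLp.equiv 2 (Fin 2 → ℝ)).symm
              ![Real.cos (θ t), Real.sin (θ t)])⟫ :=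
  desired_orientation_rate_general φ hφ k p θ θd hθdd hne hgrad hp
end
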